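/- Let M be an infinite subset of ℕ, let ξ₁ < ξ₂ be countable ordinals, let ℒ₁ be a ξ₁-uniform family on M and ℒ₂ a ξ₂-uniform family on M. Then there exists an infinite subset L of M such that ℒ₁ ∩ [L]^{<ω} ⊆ (ℒ₂)* \ ℒ₂. -/

import Mathlib

open Ordinal Filter Set

/-- `FinLT s t` : every element of `s` is smaller than every element of `t`
(i.e. `max s < min t`, vacuously true if one of them is empty). -/
def FinLT (s t : Finset ℕ) : Prop := ∀ a ∈ s, ∀ b ∈ t, a < b

/-- `s` is an initial segment of `t`  (`s ⪯ t`). -/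
def InitSeg (s t : Finset ℕ) : Prop :=
  s ⊆ t ∧ ∀ a ∈ t, ∀ b ∈ s, a ≤ b → a ∈ s

/-- `s` is a proper initial segment of `t`  (`s ≺ t`). -/
def PInitSeg (s t : Finset ℕ) : Prop := InitSeg s t ∧ s ≠ t

/-- `[M]^{<ω}` : the finite subsets of `M`. -/
def FinSubs (M : Set ℕ) : Set (Finset ℕ) := {s | ↑s ⊆ M}

/-- `ℒ(m) = {s : {m} ∪ s ∈ ℒ and {m} < s}`. -/
def famAt (L : Set (Finset ℕ)) (m : ℕ) : Set (Finset ℕ) :=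
  {s | insert m s ∈ L ∧ ∀ a ∈ s, m < a}

/-- `ℒ*` : the family of initial segments of elements of `ℒ`. -/
def famStar (L : Set (Finset ℕ)) : Set (Finset ℕ) := {t | ∃ s ∈ L, InitSeg t s}

/-- `ℒ_*` : the family of subsets of elements of `ℒ`. -/
def famSub (L : Set (Finset ℕ)) : Set (Finset ℕ) := {t | ∃ s ∈ L, t ⊆ s}

/-- A family is Sperner if no element is a proper subset of another. -/
def Sperner (L : Set (Finset ℕ)) : Prop := ¬ ∃ s ∈ L, ∃ t ∈ L, s ⊂ t

/-- A family is hereditary if it is closed under taking subsets. -/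
def Hereditary (F : Set (Finset ℕ)) : Prop := ∀ s ∈ F, ∀ t ⊆ s, t ∈ F

/-- `IsUniform ξ ℒ M` : `ℒ` is a `ξ`-uniform family on `M`. -/
inductive IsUniform : Ordinal.{0} → Set (Finset ℕ) → Set ℕ → Prop
  | zero (M : Set ℕ) : IsUniform 0 {(∅ : Finset ℕ)} M
  | succ (ζ : Ordinal.{0}) (L : Set (Finset ℕ)) (M : Set ℕ)
      (hsub : L ⊆ FinSubs M) (hne : (∅ : Finset ℕ) ∉ L)
      (h : ∀ m ∈ M, IsUniform ζ (famAt L m) (M ∩ Set.Ioi m)) :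
      IsUniform (ζ + 1) L M
  | limit (ξ : Ordinal.{0}) (L : Set (Finset ℕ)) (M : Set ℕ)
      (hlim : Order.IsSuccLimit ξ)
      (hsub : L ⊆ FinSubs M) (hne : (∅ : Finset ℕ) ∉ L)
      (ξm : ℕ → Ordinal.{0})
      (hmono : ∀ m ∈ M, ∀ n ∈ M, m < n → ξm m < ξm n)
      (hlt : ∀ m ∈ M, ξm m < ξ)
      (hsup : ∀ β < ξ, ∃ m ∈ M, β ≤ ξm m)
      (h : ∀ m ∈ M, IsUniform (ξm m) (famAt L m) (M ∩ Set.Ioi m)) :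
      IsUniform ξ L M

/-- The characteristic function of a finite set, as an element of the
product space `ℕ → Bool` (i.e. `2^ℕ`). -/
def toChar (s : Finset ℕ) : ℕ → Bool := fun n => decide (n ∈ s)

/-- A family of finite subsets of `ℕ` is pointwise closed if its image in `2^ℕ`
(under characteristic functions) is closed in the product topology. -/
def PtwiseClosed (F : Set (Finset ℕ)) : Prop := IsClosed (toChar '' F)

/-- The first strong Cantor--Bendixson derivative of `F` on `M`:
the set of `A ∈ F ∩ [M]^{<ω}` such that `A` is a cluster point (in `2^ℕ`) of
`{B ∈ F : B ⊆ A ∪ L}` for every infinite `L ⊆ M`. -/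
def derivOne (M : Set ℕ) (F : Set (Finset ℕ)) : Set (Finset ℕ) :=
  {A | A ∈ F ∧ ↑A ⊆ M ∧ ∀ L : Set ℕ, L ⊆ M → L.Infinite →
    AccPt (toChar A) (𝓟 (toChar '' {B | B ∈ F ∧ ↑B ⊆ ↑A ∪ L}))}

/-- The iterated strong Cantor--Bendixson derivatives `(F)^ξ_M`. -/
noncomputable def CBDeriv (F : Set (Finset ℕ)) (M : Set ℕ) (o : Ordinal.{0}) :
    Set (Finset ℕ) :=
  Ordinal.limitRecOn o F (fun _ ih => derivOne M ih)
    (fun o _ ih => ⋂ (β : Ordinal.{0}) (h : β < o), ih β h)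

/-- The strong Cantor--Bendixson index `s_M(F)` : the least ordinal `ξ`
with `(F)^ξ_M = ∅`. -/
noncomputable def CBIndex (F : Set (Finset ℕ)) (M : Set ℕ) : Ordinal.{0} :=
  sInf {o : Ordinal.{0} | CBDeriv F M o = ∅}

/-! Write `ℒ(s) = {u : s < u, s ∪ u ∈ ℒ}`. If `ℒ₁` is `ζ₁`-uniform and `ℒ₂` is `ζ₂`-uniform on `N`
with `ζ₁ < ζ₂`, then for every large enough `ℓ ∈ N` the families `ℒ₁(ℓ)` (when nonempty) and
`ℒ₂(ℓ)` are again uniform with ranks in the same order: the rank of `ℒ₁(ℓ)` is below `ζ₁`, and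
that of `ℒ₂(ℓ)` is the predecessor of `ζ₂`, or, for a limit `ζ₂`, eventually at least `ζ₁`.
Choosing the elements of `L` one at a time, each beyond the finitely many thresholds attached
to the subsets of the earlier ones, keeps `rank ℒ₁(s) < rank ℒ₂(s)` for every finite `s ⊆ L`
with `ℒ₁(s) ≠ ∅`. For `s ∈ ℒ₁` this forces `rank ℒ₁(s) = 0 < rank ℒ₂(s)`, so `ℒ₂(s)` is
nonempty but does not contain `∅`: `s` is an initial segment of a member of `ℒ₂` and `s ∉ ℒ₂`.
-/

theorem exists_infinite_subset_of_forall_exists_insert {α : Type*} [DecidableEq α]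
    {M : Set α} {P : Finset α → Prop} (h0 : P ∅)
    (hstep : ∀ F, P F → ∃ a ∈ M, a ∉ F ∧ P (insert a F)) :
    ∃ L ⊆ M, L.Infinite ∧ ∀ s : Finset α, ↑s ⊆ L → ∃ F, s ⊆ F ∧ P F := by
  choose next hnextM hnext_notMem hnextP using fun F : {F // P F} => hstep F.1 F.2
  let seq : ℕ → {F // P F} := fun k =>
    Nat.rec ⟨∅, h0⟩ (fun _ F => ⟨insert (next F) F, hnextP F⟩) k
  have seq_succ (k : ℕ) : (seq (k + 1)).1 = insert (next (seq k)) (seq k).1 := rfl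
  have hmono : Monotone fun k => ((seq k).1 : Set α) :=
    monotone_nat_of_le_succ fun k => by simp [seq_succ, subset_insert]
  have hseqM (k : ℕ) : ((seq k).1 : Set α) ⊆ M := by
    induction k with
    | zero => simp [seq]
    | succ k ih => simpa [seq_succ] using insert_subset (hnextM _) ih
  have hcover (s : Finset α) (hs : ↑s ⊆ ⋃ k, ((seq k).1 : Set α)) :
      ∃ k, ↑s ⊆ ((seq k).1 : Set α) :=
    hmono.directed_le.exists_mem_subset_of_finset_subset_biUnion hs
  refine ⟨⋃ k, ((seq k).1 : Set α), iUnion_subset hseqM, fun hfin => ?_, fun s hs => ?_⟩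
  · obtain ⟨k, hk⟩ := hcover hfin.toFinset (by simp)
    have hnext_mem : next (seq k) ∈ ⋃ k, ((seq k).1 : Set α) :=
      mem_iUnion.2 ⟨k + 1, by simp [seq_succ]⟩
    exact hnext_notMem (seq k) (hk (hfin.mem_toFinset.2 hnext_mem))
  · obtain ⟨k, hk⟩ := hcover s hs
    exact ⟨(seq k).1, Finset.coe_subset.1 hk, (seq k).2⟩

lemma Set.Infinite.inter_Ioi {α : Type*} [LinearOrder α] [LocallyFiniteOrderBot α] {M : Set α}
    (hM : M.Infinite) (m : α) : (M ∩ Ioi m).Infinite := by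
  simpa only [sdiff_eq, compl_Iic] using hM.sdiff (finite_Iic m)

def famAfter (L : Set (Finset ℕ)) (s : Finset ℕ) : Set (Finset ℕ) :=
  {u | s ∪ u ∈ L ∧ FinLT s u}

def tailAbove (M : Set ℕ) (s : Finset ℕ) : Set ℕ := {n | n ∈ M ∧ ∀ a ∈ s, a < n}

section famAfter

variable {L : Set (Finset ℕ)} {s : Finset ℕ}

@[simp]
lemma famAfter_empty (L : Set (Finset ℕ)) : famAfter L ∅ = L := by
  ext u; simp [famAfter, FinLT]

lemma empty_mem_famAfter : ∅ ∈ famAfter L s ↔ s ∈ L := by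
  simp [famAfter, FinLT]

lemma famAfter_insert {ℓ : ℕ} (h : ∀ a ∈ s, a < ℓ) :
    famAfter L (insert ℓ s) = famAt (famAfter L s) ℓ := by
  ext u
  simp only [famAfter, famAt, FinLT, mem_ofPred_eq, Finset.mem_insert, Finset.insert_union,
    Finset.union_insert, forall_eq_or_imp, forall_and]
  constructor
  · rintro ⟨hu, hℓu, hsu⟩
    exact ⟨⟨hu, h, hsu⟩, hℓu⟩
  · rintro ⟨⟨hu, -, hsu⟩, hℓu⟩
    exact ⟨hu, hℓu, hsu⟩

lemma initSeg_union_of_finLT {u : Finset ℕ} (h : FinLT s u) : InitSeg s (s ∪ u) := by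
  refine ⟨Finset.subset_union_left, fun a ha b hb hab => ?_⟩
  rcases Finset.mem_union.1 ha with ha | ha
  · exact ha
  · exact absurd hab (not_le.2 (h b hb a ha))

end famAfter

section tailAbove

variable {M : Set ℕ}

@[simp]
lemma tailAbove_empty (M : Set ℕ) : tailAbove M ∅ = M := by
  ext n; simp [tailAbove]

lemma tailAbove_insert (s : Finset ℕ) (ℓ : ℕ) :
    tailAbove M (insert ℓ s) = tailAbove M s ∩ Ioi ℓ := by
  ext n
  simp only [tailAbove, mem_inter_iff, mem_ofPred_eq, mem_Ioi, Finset.mem_insert,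
    forall_eq_or_imp]
  tauto

lemma Set.Infinite.tailAbove (hM : M.Infinite) (s : Finset ℕ) : (tailAbove M s).Infinite :=
  Nat.frequently_atTop_iff_infinite.1 <| (Nat.frequently_atTop_iff_infinite.2 hM).and_eventually <|
    (eventually_all_finset s).2 fun a _ => eventually_gt_atTop a

end tailAbove

namespace IsUniform

variable {ξ : Ordinal.{0}} {L : Set (Finset ℕ)} {M : Set ℕ}

lemma empty_notMem (h : IsUniform ξ L M) (hξ : ξ ≠ 0) : ∅ ∉ L := by
  cases h with
  | zero => exact absurd rfl hξ
  | succ _ _ _ _ hne => exact hne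
  | limit _ _ _ _ _ hne => exact hne

lemma nonempty (h : IsUniform ξ L M) (hM : M.Infinite) : L.Nonempty := by
  induction h with
  | zero => exact ⟨∅, rfl⟩
  | succ _ _ M _ _ _ ih | limit _ _ M _ _ _ _ _ _ _ _ ih =>
    obtain ⟨m, hm⟩ := hM.nonempty
    obtain ⟨u, hu, -⟩ := ih m hm (hM.inter_Ioi m)
    exact ⟨_, hu⟩

lemma exists_lt_famAt {ℓ : ℕ} (h : IsUniform ξ L M) (hℓ : ℓ ∈ M)
    (hne : (famAt L ℓ).Nonempty) : ∃ ζ < ξ, IsUniform ζ (famAt L ℓ) (M ∩ Ioi ℓ) := by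
  cases h with
  | zero =>
    obtain ⟨u, hu, -⟩ := hne
    exact absurd hu (Finset.insert_ne_empty ℓ u)
  | succ ζ _ _ _ _ h => exact ⟨ζ, Order.lt_add_one_iff.2 le_rfl, h ℓ hℓ⟩
  | limit _ _ _ _ _ _ ξm _ hlt _ h => exact ⟨ξm ℓ, hlt ℓ hℓ, h ℓ hℓ⟩

end IsUniform

def RankLT (N : Set ℕ) (L₁ L₂ : Set (Finset ℕ)) : Prop :=
  ∃ ξ₁ ξ₂ : Ordinal.{0}, ξ₁ < ξ₂ ∧ IsUniform ξ₁ L₁ N ∧ IsUniform ξ₂ L₂ N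

namespace RankLT

variable {N : Set ℕ} {L₁ L₂ : Set (Finset ℕ)}

lemma eventually_famAt (h : RankLT N L₁ L₂) :
    ∀ᶠ ℓ in atTop, ℓ ∈ N → (famAt L₁ ℓ).Nonempty →
      RankLT (N ∩ Ioi ℓ) (famAt L₁ ℓ) (famAt L₂ ℓ) := by
  obtain ⟨ξ₁, ξ₂, h12, h₁, h₂⟩ := h
  have of_rank_le (ℓ : ℕ) (hℓ : ℓ ∈ N) (hne : (famAt L₁ ℓ).Nonempty) (ζ : Ordinal.{0})
      (hζ : ξ₁ ≤ ζ) (h₂ℓ : IsUniform ζ (famAt L₂ ℓ) (N ∩ Ioi ℓ)) :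
      RankLT (N ∩ Ioi ℓ) (famAt L₁ ℓ) (famAt L₂ ℓ) :=
    have ⟨ζ₁, hζ₁, h₁ℓ⟩ := h₁.exists_lt_famAt hℓ hne
    ⟨ζ₁, ζ, hζ₁.trans_le hζ, h₁ℓ, h₂ℓ⟩
  cases h₂ with
  | zero => exact (not_lt_zero h12).elim
  | succ ζ _ _ _ _ h =>
    exact Eventually.of_forall fun ℓ hℓ hne =>
      of_rank_le ℓ hℓ hne ζ (Order.lt_add_one_iff.1 h12) (h ℓ hℓ)
  | limit _ _ _ _ _ _ ξm hmono _ hsup h =>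
    obtain ⟨m, hm, hξ₁m⟩ := hsup ξ₁ h12
    filter_upwards [eventually_gt_atTop m] with ℓ hmℓ hℓ hne
    exact of_rank_le ℓ hℓ hne (ξm ℓ) (hξ₁m.trans (hmono m hm ℓ hℓ hmℓ).le) (h ℓ hℓ)

lemma mem_famStar_sdiff {s : Finset ℕ} (h : RankLT N (famAfter L₁ s) (famAfter L₂ s))
    (hN : N.Infinite) (hs : s ∈ L₁) : s ∈ famStar L₂ \ L₂ := by
  obtain ⟨ξ₁, ξ₂, h12, h₁, h₂⟩ := h
  have hξ₁ : ξ₁ = 0 := by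
    by_contra hξ₁
    exact h₁.empty_notMem hξ₁ (empty_mem_famAfter.2 hs)
  obtain ⟨u, hu, hsu⟩ := h₂.nonempty hN
  refine ⟨⟨s ∪ u, hu, initSeg_union_of_finLT hsu⟩, fun hs₂ => ?_⟩
  exact h₂.empty_notMem (hξ₁ ▸ h12).ne' (empty_mem_famAfter.2 hs₂)

end RankLT

def RankLTOnSubsets (M : Set ℕ) (L₁ L₂ : Set (Finset ℕ)) (F : Finset ℕ) : Prop :=
  ∀ s ⊆ F, (famAfter L₁ s).Nonempty → RankLT (tailAbove M s) (famAfter L₁ s) (famAfter L₂ s)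

lemma RankLTOnSubsets.exists_insert {M : Set ℕ} {L₁ L₂ : Set (Finset ℕ)} {F : Finset ℕ}
    (hM : M.Infinite) (hF : RankLTOnSubsets M L₁ L₂ F) :
    ∃ ℓ ∈ M, ℓ ∉ F ∧ RankLTOnSubsets M L₁ L₂ (insert ℓ F) := by
  have hev : ∀ᶠ ℓ in atTop, (∀ a ∈ F, a < ℓ) ∧ ∀ s ∈ F.powerset,
      ℓ ∈ tailAbove M s → (famAt (famAfter L₁ s) ℓ).Nonempty →
        RankLT (tailAbove M s ∩ Ioi ℓ) (famAt (famAfter L₁ s) ℓ) (famAt (famAfter L₂ s) ℓ) := by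
    refine ((eventually_all_finset F).2 fun a _ => eventually_gt_atTop a).and <|
      (eventually_all_finset F.powerset).2 fun s hs => ?_
    by_cases hne : (famAfter L₁ s).Nonempty
    · exact (hF s (Finset.mem_powerset.1 hs) hne).eventually_famAt
    · exact Eventually.of_forall fun ℓ _ ⟨_, hu, _⟩ => (hne ⟨_, hu⟩).elim
  obtain ⟨ℓ, hℓM, hFℓ, hstep⟩ := ((Nat.frequently_atTop_iff_infinite.2 hM).and_eventually hev).exists
  refine ⟨ℓ, hℓM, fun hℓF => (hFℓ ℓ hℓF).false, fun t ht hne => ?_⟩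
  by_cases hℓt : ℓ ∈ t
  · have hsF : t.erase ℓ ⊆ F := Finset.subset_insert_iff.1 ht
    have hsℓ : ∀ a ∈ t.erase ℓ, a < ℓ := fun a ha => hFℓ a (hsF ha)
    rw [← Finset.insert_erase hℓt, famAfter_insert hsℓ] at hne ⊢
    rw [famAfter_insert hsℓ, tailAbove_insert]
    exact hstep (t.erase ℓ) (Finset.mem_powerset.2 hsF) ⟨hℓM, hsℓ⟩ hne
  · exact hF t ((Finset.subset_insert_iff_of_notMem hℓt).1 ht) hne

theorem lower_uniform_in_star_general (M : Set ℕ) (hM : M.Infinite)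
    (ξ₁ ξ₂ : Ordinal.{0}) (h12 : ξ₁ < ξ₂)
    (𝓛₁ 𝓛₂ : Set (Finset ℕ))
    (h₁ : IsUniform ξ₁ 𝓛₁ M) (h₂ : IsUniform ξ₂ 𝓛₂ M) :
    ∃ L : Set ℕ, L ⊆ M ∧ L.Infinite ∧ 𝓛₁ ∩ FinSubs L ⊆ famStar 𝓛₂ \ 𝓛₂ := by
  have h0 : RankLTOnSubsets M 𝓛₁ 𝓛₂ ∅ := fun s hs _ => by
    rw [Finset.subset_empty.1 hs, famAfter_empty, famAfter_empty, tailAbove_empty]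
    exact ⟨ξ₁, ξ₂, h12, h₁, h₂⟩
  obtain ⟨L, hLM, hL, hcover⟩ :=
    exists_infinite_subset_of_forall_exists_insert h0 fun _ hF => hF.exists_insert hM
  refine ⟨L, hLM, hL, fun s ⟨hs₁, hsL⟩ => ?_⟩
  obtain ⟨F, hsF, hF⟩ := hcover s hsL
  exact (hF s hsF ⟨∅, empty_mem_famAfter.2 hs₁⟩).mem_famStar_sdiff (hM.tailAbove s) hs₁

/-- **Corollary 2.13.** If `ℒ₁` is `ξ₁`-uniform and `ℒ₂` is `ξ₂`-uniform on
`M` with `ξ₁ < ξ₂`, then there is an infinite `L ⊆ M` with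
`ℒ₁ ∩ [L]^{<ω} ⊆ (ℒ₂)* \ ℒ₂`. -/
theorem lower_uniform_in_star (M : Set ℕ) (hM : M.Infinite)
    (ξ₁ ξ₂ : Ordinal.{0}) (h12 : ξ₁ < ξ₂) (hξ₂ : ξ₂.card ≤ Cardinal.aleph0)
    (𝓛₁ 𝓛₂ : Set (Finset ℕ))
    (h₁ : IsUniform ξ₁ 𝓛₁ M) (h₂ : IsUniform ξ₂ 𝓛₂ M) :
    ∃ L : Set ℕ, L ⊆ M ∧ L.Infinite ∧ 𝓛₁ ∩ FinSubs L ⊆ famStar 𝓛₂ \ 𝓛₂ :=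
  lower_uniform_in_star_general M hM ξ₁ ξ₂ h12 𝓛₁ 𝓛₂ h₁ h₂
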